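/- For all f, f⁺ ∈ ℂ^N, the (nonsmooth) amplitude loss satisfies the quadratic upper bound L(f⁺) ≤ L(f) + 2·Re⟨G(f), f⁺ − f⟩ + L̄·‖f⁺ − f‖₂², where G(f) = A^H(Af − b ⊙ sgn(Af)) is the generalized gradient, L̄ = λmax(A^H A), and Re⟨u,v⟩ = Re(Σ_n ū_n v_n). -/

import Mathlib

open scoped BigOperators
open Matrix

noncomputable section

namespace AWF

/-- Complex signum: `z/|z|` for `z ≠ 0`, and `0` at `0`. -/
def csgn (z : ℂ) : ℂ := if z = 0 then 0 else z / (‖z‖ : ℂ)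

variable {M N : ℕ}

/-- Amplitude loss `L(f) = ∑ (b_m − |(Af)_m|)²`. -/
def ampLoss (A : Matrix (Fin M) (Fin N) ℂ) (b : Fin M → ℝ) (f : Fin N → ℂ) : ℝ :=
  ∑ m, (b m - ‖A.mulVec f m‖) ^ 2

/-- Generalized (Wirtinger) gradient `G(f) = Aᴴ(Af − b ⊙ sgn(Af))`. -/
def wGrad (A : Matrix (Fin M) (Fin N) ℂ) (b : Fin M → ℝ) (f : Fin N → ℂ) : Fin N → ℂ :=
  Aᴴ.mulVec (fun m => A.mulVec f m - (b m : ℂ) * csgn (A.mulVec f m))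

/-- Euclidean (ℓ₂) norm of a complex vector. -/
def norm2 {n : ℕ} (v : Fin n → ℂ) : ℝ := Real.sqrt (∑ i, ‖v i‖ ^ 2)

/-- The largest eigenvalue of the positive semidefinite Hermitian matrix `Aᴴ A`. -/
def lamMax (A : Matrix (Fin M) (Fin N) ℂ) : ℝ :=
  ⨆ i, (Matrix.isHermitian_conjTranspose_mul_self A).eigenvalues i

end AWF
/-!
For each measurement, `sgn y` is a subgradient of the modulus at `y`, so for `b ≥ 0` the
summand `(b - |y + w|)²` is bounded by its first-order expansion at `y` plus `|w|²`.
With `y = (Af)_m` and `w = (A(f⁺ - f))_m`, the first-order terms sum to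
`2 Re⟨G(f), f⁺ - f⟩` after moving `A` across the inner product, and the remainder
`‖A(f⁺ - f)‖²` is at most `λmax(AᴴA) ‖f⁺ - f‖²` because `λmax • 1 - AᴴA` is positive
semidefinite.
-/

open ComplexConjugate
open scoped ComplexOrder

namespace Matrix

variable {𝕜 n : Type*} [RCLike 𝕜] [Fintype n]

lemma re_star_dotProduct_self (v : n → 𝕜) : RCLike.re (star v ⬝ᵥ v) = ∑ i, ‖v i‖ ^ 2 := by
  simp only [dotProduct, Pi.star_apply, RCLike.star_def, RCLike.conj_mul, map_sum]
  norm_cast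

lemma IsHermitian.re_dotProduct_mulVec_le [DecidableEq n] {H : Matrix n n 𝕜}
    (hH : H.IsHermitian) {c : ℝ} (hc : ∀ i, hH.eigenvalues i ≤ c) (x : n → 𝕜) :
    RCLike.re (star x ⬝ᵥ (H *ᵥ x)) ≤ c * RCLike.re (star x ⬝ᵥ x) := by
  have hpsd : (algebraMap 𝕜 (Matrix n n 𝕜) c - H).PosSemidef := by
    refine posSemidef_iff_isHermitian_and_spectrum_nonneg.mpr ⟨?_, ?_⟩
    · rw [Algebra.algebraMap_eq_smul_one]
      exact (isHermitian_one.smul (RCLike.conj_ofReal c)).sub hH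
    · rw [← spectrum.singleton_sub_eq, hH.spectrum_eq_image_range]
      rintro _ ⟨_, rfl, _, ⟨_, ⟨i, rfl⟩, rfl⟩, rfl⟩
      show 0 ≤ (c : 𝕜) - (hH.eigenvalues i : 𝕜)
      rw [← RCLike.ofReal_sub, RCLike.ofReal_nonneg, sub_nonneg]
      exact hc i
  simpa [sub_mulVec, Algebra.algebraMap_eq_smul_one, smul_mulVec, dotProduct_smul,
    RCLike.smul_re] using hpsd.re_dotProduct_nonneg x

end Matrix

namespace AWF

lemma conj_csgn_mul_self (z : ℂ) : conj (csgn z) * z = ‖z‖ := by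
  by_cases hz : z = 0
  · simp [hz]
  · have hnorm : (‖z‖ : ℂ) ≠ 0 := by simpa using hz
    rw [csgn, if_neg hz, map_div₀, Complex.conj_ofReal, div_mul_eq_mul_div, Complex.conj_mul']
    field_simp

lemma norm_csgn_le_one (z : ℂ) : ‖csgn z‖ ≤ 1 := by
  by_cases hz : z = 0 <;> simp [csgn, hz]

lemma norm_add_re_conj_csgn_mul_le (y w : ℂ) : ‖y‖ + (conj (csgn y) * w).re ≤ ‖y + w‖ :=
  calc ‖y‖ + (conj (csgn y) * w).re = (conj (csgn y) * (y + w)).re := by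
        rw [mul_add, Complex.add_re, conj_csgn_mul_self, Complex.ofReal_re]
    _ ≤ ‖conj (csgn y) * (y + w)‖ := Complex.re_le_norm _
    _ ≤ ‖y + w‖ := by
        rw [norm_mul, Complex.norm_conj]
        exact mul_le_of_le_one_left (norm_nonneg _) (norm_csgn_le_one y)

lemma sq_sub_norm_add_le {b : ℝ} (hb : 0 ≤ b) (y w : ℂ) :
    (b - ‖y + w‖) ^ 2 ≤ (b - ‖y‖) ^ 2 + 2 * (conj (y - b * csgn y) * w).re + ‖w‖ ^ 2 := by
  have hsq : ‖y + w‖ ^ 2 = ‖y‖ ^ 2 + 2 * (conj y * w).re + ‖w‖ ^ 2 := by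
    rw [norm_add_sq (𝕜 := ℂ), RCLike.inner_apply, mul_comm w]
    rfl
  have hlin : (conj (y - b * csgn y) * w).re = (conj y * w).re - b * (conj (csgn y) * w).re := by
    simp only [map_sub, map_mul, Complex.conj_ofReal, sub_mul, mul_assoc, Complex.sub_re,
      Complex.re_ofReal_mul]
  have hsubgrad := mul_le_mul_of_nonneg_left (norm_add_re_conj_csgn_mul_le y w) hb
  nlinarith

variable {M N : ℕ}

lemma ampLoss_add_le (A : Matrix (Fin M) (Fin N) ℂ) {b : Fin M → ℝ} (hb : ∀ m, 0 ≤ b m)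
    (f d : Fin N → ℂ) :
    ampLoss A b (f + d) ≤
      ampLoss A b f + 2 * (star (wGrad A b f) ⬝ᵥ d).re + ∑ m, ‖(A *ᵥ d) m‖ ^ 2 := by
  have hgrad : star (wGrad A b f) ⬝ᵥ d =
      ∑ m, conj (A.mulVec f m - b m * csgn (A.mulVec f m)) * (A *ᵥ d) m := by
    rw [wGrad, star_mulVec, conjTranspose_conjTranspose, ← dotProduct_mulVec]
    rfl
  rw [hgrad, Complex.re_sum, Finset.mul_sum, ampLoss, ampLoss, mulVec_add,
    ← Finset.sum_add_distrib, ← Finset.sum_add_distrib]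
  exact Finset.sum_le_sum fun m _ => sq_sub_norm_add_le (hb m) _ _

lemma sum_norm_sq_mulVec_le_lamMax (A : Matrix (Fin M) (Fin N) ℂ) (d : Fin N → ℂ) :
    ∑ m, ‖(A *ᵥ d) m‖ ^ 2 ≤ lamMax A * ∑ n, ‖d n‖ ^ 2 := by
  have hmax (i : Fin N) : (isHermitian_conjTranspose_mul_self A).eigenvalues i ≤ lamMax A :=
    le_ciSup (Set.finite_range _).bddAbove i
  have hAd : star (A *ᵥ d) ⬝ᵥ (A *ᵥ d) = star d ⬝ᵥ ((Aᴴ * A) *ᵥ d) := by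
    rw [star_mulVec, dotProduct_mulVec, dotProduct_mulVec, vecMul_vecMul]
  rw [← re_star_dotProduct_self, ← re_star_dotProduct_self, hAd]
  exact (isHermitian_conjTranspose_mul_self A).re_dotProduct_mulVec_le hmax d

/-- Quadratic upper bound for the (nonsmooth) amplitude loss:
`L(f⁺) ≤ L(f) + 2 Re⟨G(f), f⁺ − f⟩ + L̄ ‖f⁺ − f‖₂²` with `L̄ = λmax(AᴴA)`. -/
theorem ampLoss_quadratic_upper_bound
    {M N : ℕ} (A : Matrix (Fin M) (Fin N) ℂ) (b : Fin M → ℝ) (hb : ∀ m, 0 ≤ b m)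
    (f fplus : Fin N → ℂ) :
    ampLoss A b fplus
      ≤ ampLoss A b f
        + 2 * (∑ n, (starRingEnd ℂ) (wGrad A b f n) * (fplus n - f n)).re
        + lamMax A * ∑ n, ‖fplus n - f n‖ ^ 2 := by
  have hsplit : fplus = f + (fplus - f) := (add_sub_cancel f fplus).symm
  calc ampLoss A b fplus
      ≤ ampLoss A b f + 2 * (star (wGrad A b f) ⬝ᵥ (fplus - f)).re
          + ∑ m, ‖(A *ᵥ (fplus - f)) m‖ ^ 2 := by
        conv_lhs => rw [hsplit]
        exact ampLoss_add_le A hb f (fplus - f)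
    _ ≤ _ := add_le_add le_rfl (sum_norm_sq_mulVec_le_lamMax A (fplus - f))

end AWF
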